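/- arXiv:1810.03501 — 3 statements merged into one kernel-verified Lean document; each statement's English description precedes it below -/
import Mathlib

section
/- Let β > 0, r ∈ ℝ, and define F(x) = (1/β) ln x + (1/β)(r/β + ln β − 1) for x > 0. Then for the deterministic control problem sup over c > 0 of ∫₀^∞ e^{−βt} ln c_t dt subject to dX_t = (r X_t − c_t) dt, X_0 = x, the value equals F(x), attained by c_t = β X_t. -/
/-!
The optimal plan keeps wealth on the path `X*_t = x e^{(r-β)t}` and consumes `c*_t = β X*_t`;
since `log c*_t` is affine in `t`, its discounted utility is an explicit Laplace-type integral.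
For the upper bound, the tangent-line inequality `log c ≤ log c* - 1 + c / c*` bounds the
utility of any admissible plan by that of the optimal one, minus `1/β`, plus
`(βx)⁻¹ ∫ e^{-rt} c_t dt`. The wealth equation gives `∫₀^T e^{-rt} c_t dt = x - e^{-rT} X_T ≤ x`,
so the last term is at most `1/β`; letting `T → ∞` finishes the proof.
-/

open MeasureTheory Set Real Filter Topology

lemma integrableOn_mul_exp_neg_mul {β : ℝ} (hβ : 0 < β) :
    IntegrableOn (fun t => t * exp (-β * t)) (Ioi 0) := by
  simpa using integrableOn_rpow_mul_exp_neg_mul_rpow (s := 1) (p := 1) (by norm_num) one_pos hβ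

lemma integral_mul_exp_neg_mul {β : ℝ} (hβ : 0 < β) :
    ∫ t in Ioi (0:ℝ), t * exp (-β * t) = 1 / β ^ 2 := by
  simpa [Gamma_two, neg_mul, show (2:ℝ) - 1 = 1 by norm_num] using
    integral_rpow_mul_exp_neg_mul_Ioi two_pos hβ

lemma integrableOn_exp_neg_mul_mul_affine {β : ℝ} (hβ : 0 < β) (a b : ℝ) :
    IntegrableOn (fun t => exp (-β * t) * (a + b * t)) (Ioi 0) := by
  have h : IntegrableOn (fun t => a * exp (-β * t) + b * (t * exp (-β * t))) (Ioi 0) :=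
    ((integrableOn_exp_mul_Ioi (neg_lt_zero.2 hβ) 0).const_mul a).add
      ((integrableOn_mul_exp_neg_mul hβ).const_mul b)
  refine h.congr_fun (fun t _ => ?_) measurableSet_Ioi
  ring

lemma integral_exp_neg_mul_mul_affine {β : ℝ} (hβ : 0 < β) (a b : ℝ) :
    ∫ t in Ioi (0:ℝ), exp (-β * t) * (a + b * t) = a / β + b / β ^ 2 := by
  have hsplit : (fun t => exp (-β * t) * (a + b * t)) =
      fun t => a * exp (-β * t) + b * (t * exp (-β * t)) := by
    funext t; ring
  rw [hsplit, integral_add ((integrableOn_exp_mul_Ioi (neg_lt_zero.2 hβ) 0).const_mul a)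
    ((integrableOn_mul_exp_neg_mul hβ).const_mul b), integral_const_mul, integral_const_mul,
    integral_exp_mul_Ioi (neg_lt_zero.2 hβ), integral_mul_exp_neg_mul hβ]
  simp [div_eq_mul_inv]

lemma hasDerivAt_exp_neg_mul_mul_of_hasDerivAt {r t : ℝ} {X c : ℝ → ℝ}
    (hX : HasDerivAt X (r * X t - c t) t) :
    HasDerivAt (fun s => exp (-r * s) * X s) (-(exp (-r * t) * c t)) t := by
  have hexp : HasDerivAt (fun s => exp (-r * s)) (exp (-r * t) * (-r)) t := by
    simpa using ((hasDerivAt_id t).const_mul (-r)).exp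
  exact (hexp.mul hX).congr_deriv (by ring)

lemma integral_exp_neg_mul_mul_le_of_hasDerivAt {r T : ℝ} {X c : ℝ → ℝ} (hT : 0 ≤ T)
    (hX : ∀ t ∈ Icc 0 T, HasDerivAt X (r * X t - c t) t) (hc : ∀ t ∈ Icc 0 T, 0 ≤ c t)
    (hXT : 0 ≤ X T) :
    IntervalIntegrable (fun t => exp (-r * t) * c t) volume 0 T ∧
      ∫ t in (0:ℝ)..T, exp (-r * t) * c t ≤ X 0 := by
  have hderiv : ∀ t ∈ Icc 0 T,
      HasDerivAt (fun s => -(exp (-r * s) * X s)) (exp (-r * t) * c t) t := fun t ht => by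
    simpa using (hasDerivAt_exp_neg_mul_mul_of_hasDerivAt (hX t ht)).fun_neg
  have hint : IntervalIntegrable (fun t => exp (-r * t) * c t) volume 0 T := by
    refine intervalIntegral.intervalIntegrable_deriv_of_nonneg
      (fun t ht => (hderiv t (uIcc_of_le hT ▸ ht)).continuousAt.continuousWithinAt)
      (fun t ht => hderiv t ?_) (fun t ht => mul_nonneg (exp_pos _).le (hc t ?_)) <;>
    · rw [min_eq_left hT, max_eq_right hT] at ht
      exact Ioo_subset_Icc_self ht
  refine ⟨hint, ?_⟩
  rw [intervalIntegral.integral_eq_sub_of_hasDerivAt (uIcc_of_le hT ▸ hderiv) hint]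
  have hterminal : 0 ≤ exp (-r * T) * X T := mul_nonneg (exp_pos _).le hXT
  simp only [mul_zero, exp_zero, one_mul]
  linarith

lemma log_le_log_sub_one_add_div {c k : ℝ} (hc : 0 < c) (hk : 0 < k) :
    log c ≤ log k - 1 + c / k := by
  have := log_le_sub_one_of_pos (div_pos hc hk)
  rw [log_div hc.ne' hk.ne'] at this
  linarith

noncomputable def optimalWealth (β r x t : ℝ) : ℝ := x * exp ((r - β) * t)

@[simp]
lemma optimalWealth_zero (β r x : ℝ) : optimalWealth β r x 0 = x := by
  simp [optimalWealth]

lemma optimalWealth_pos {β r x : ℝ} (hx : 0 < x) (t : ℝ) : 0 < optimalWealth β r x t := by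
  unfold optimalWealth; positivity

lemma hasDerivAt_optimalWealth (β r x t : ℝ) :
    HasDerivAt (optimalWealth β r x)
      (r * optimalWealth β r x t - β * optimalWealth β r x t) t := by
  have h := (((hasDerivAt_id t).const_mul (r - β)).exp).const_mul x
  exact h.congr_deriv (by simp only [optimalWealth, id]; ring)

lemma log_mul_optimalWealth {β r x : ℝ} (hβ : 0 < β) (hx : 0 < x) (t : ℝ) :
    log (β * optimalWealth β r x t) = log β + log x + (r - β) * t := by
  rw [optimalWealth, log_mul hβ.ne' (by positivity), log_mul hx.ne' (exp_ne_zero _), log_exp]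
  ring

lemma integrableOn_exp_neg_mul_mul_log_optimal {β r x : ℝ} (hβ : 0 < β) (hx : 0 < x) :
    IntegrableOn (fun t => exp (-β * t) * log (β * optimalWealth β r x t)) (Ioi 0) := by
  simpa only [log_mul_optimalWealth hβ hx] using
    integrableOn_exp_neg_mul_mul_affine hβ (log β + log x) (r - β)

lemma integral_exp_neg_mul_mul_log_optimal {β r x : ℝ} (hβ : 0 < β) (hx : 0 < x) :
    ∫ t in Ioi (0:ℝ), exp (-β * t) * log (β * optimalWealth β r x t) =
      (1/β) * log x + (1/β) * (r/β + log β - 1) := by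
  simp only [log_mul_optimalWealth hβ hx]
  rw [integral_exp_neg_mul_mul_affine hβ]
  field_simp
  ring

lemma exp_neg_mul_mul_log_le {β r x c t : ℝ} (hβ : 0 < β) (hx : 0 < x) (hc : 0 < c) :
    exp (-β * t) * log c ≤
      exp (-β * t) * (log β + log x - 1 + (r - β) * t) + (β * x)⁻¹ * (exp (-r * t) * c) := by
  have hk := mul_pos hβ (optimalWealth_pos (β := β) (r := r) hx t)
  have htangent := log_le_log_sub_one_add_div hc hk
  rw [log_mul_optimalWealth hβ hx] at htangent
  have hprice : exp (-β * t) * (c / (β * optimalWealth β r x t)) =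
      (β * x)⁻¹ * (exp (-r * t) * c) := by
    have hsplit : exp (-β * t) = exp (-r * t) * exp ((r - β) * t) := by
      rw [← exp_add]; ring_nf
    rw [optimalWealth, hsplit]
    field_simp
  calc exp (-β * t) * log c
      ≤ exp (-β * t) * (log β + log x - 1 + (r - β) * t + c / (β * optimalWealth β r x t)) :=
        mul_le_mul_of_nonneg_left (by linarith) (exp_pos _).le
    _ = _ := by rw [mul_add, hprice]

lemma intervalIntegral_exp_neg_mul_mul_log_le {β r x T : ℝ} {X c : ℝ → ℝ} (hβ : 0 < β)
    (hx : 0 < x) (hT : 0 ≤ T) (h0 : X 0 = x)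
    (hX : ∀ t ∈ Icc 0 T, HasDerivAt X (r * X t - c t) t) (hc : ∀ t ∈ Icc 0 T, 0 < c t)
    (hXT : 0 ≤ X T)
    (hint : IntervalIntegrable (fun t => exp (-β * t) * log (c t)) volume 0 T) :
    ∫ t in (0:ℝ)..T, exp (-β * t) * log (c t) ≤
      (∫ t in (0:ℝ)..T, exp (-β * t) * (log β + log x - 1 + (r - β) * t)) + 1 / β := by
  obtain ⟨hcint, hbudget⟩ :=
    integral_exp_neg_mul_mul_le_of_hasDerivAt hT hX (fun t ht => (hc t ht).le) hXT
  have haffine : IntervalIntegrable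
      (fun t => exp (-β * t) * (log β + log x - 1 + (r - β) * t)) volume 0 T :=
    (by fun_prop : Continuous _).intervalIntegrable _ _
  calc ∫ t in (0:ℝ)..T, exp (-β * t) * log (c t)
      ≤ ∫ t in (0:ℝ)..T, (exp (-β * t) * (log β + log x - 1 + (r - β) * t) +
          (β * x)⁻¹ * (exp (-r * t) * c t)) :=
        intervalIntegral.integral_mono_on hT hint (haffine.add (hcint.const_mul _))
          fun t ht => exp_neg_mul_mul_log_le hβ hx (hc t ht)
    _ = (∫ t in (0:ℝ)..T, exp (-β * t) * (log β + log x - 1 + (r - β) * t)) +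
          (β * x)⁻¹ * ∫ t in (0:ℝ)..T, exp (-r * t) * c t := by
        rw [intervalIntegral.integral_add haffine (hcint.const_mul _),
          intervalIntegral.integral_const_mul]
    _ ≤ (∫ t in (0:ℝ)..T, exp (-β * t) * (log β + log x - 1 + (r - β) * t)) + 1 / β := by
        have hprice : (β * x)⁻¹ * x = 1 / β := by field_simp
        have hscaled := mul_le_mul_of_nonneg_left (h0 ▸ hbudget) (inv_pos.2 (mul_pos hβ hx)).le
        linarith

lemma integral_exp_neg_mul_mul_log_le {β r x : ℝ} {X c : ℝ → ℝ} (hβ : 0 < β) (hx : 0 < x)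
    (h0 : X 0 = x) (hX : ∀ t, 0 ≤ t → HasDerivAt X (r * X t - c t) t)
    (hc : ∀ t, 0 ≤ t → 0 < c t) (hXnonneg : ∀ t, 0 ≤ t → 0 ≤ X t)
    (hint : IntegrableOn (fun t => exp (-β * t) * log (c t)) (Ioi 0)) :
    ∫ t in Ioi (0:ℝ), exp (-β * t) * log (c t) ≤ (1/β) * log x + (1/β) * (r/β + log β - 1) := by
  have hfinite : ∀ᶠ T in atTop, ∫ t in (0:ℝ)..T, exp (-β * t) * log (c t) ≤
      (∫ t in (0:ℝ)..T, exp (-β * t) * (log β + log x - 1 + (r - β) * t)) + 1 / β := by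
    filter_upwards [eventually_ge_atTop 0] with T hT
    exact intervalIntegral_exp_neg_mul_mul_log_le hβ hx hT h0 (fun t ht => hX t ht.1)
      (fun t ht => hc t ht.1) (hXnonneg T hT)
      ((intervalIntegrable_iff_integrableOn_Ioc_of_le hT).2 (hint.mono_set Ioc_subset_Ioi_self))
  have hlim := le_of_tendsto_of_tendsto (intervalIntegral_tendsto_integral_Ioi 0 hint tendsto_id)
    ((intervalIntegral_tendsto_integral_Ioi 0
      (integrableOn_exp_neg_mul_mul_affine hβ _ _) tendsto_id).add_const (1 / β)) hfinite
  rw [integral_exp_neg_mul_mul_affine hβ] at hlim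
  refine hlim.trans_eq ?_
  field_simp
  ring

/-- The deterministic logarithmic-utility consumption problem: the supremum of
`∫₀^∞ e^{-βt} ln c_t dt` over admissible pairs `(X, c)` with `X' = rX - c`,
`X₀ = x`, `c > 0`, `X ≥ 0`, equals `F(x) = (1/β) ln x + (1/β)(r/β + ln β - 1)`,
and it is attained by `c_t = β X_t`. -/
theorem deterministic_log_consumption_value (β r x : ℝ) (hβ : 0 < β) (hx : 0 < x) :
    IsGreatest
      {J : ℝ | ∃ X c : ℝ → ℝ,
        X 0 = x ∧
        (∀ t, 0 ≤ t → HasDerivAt X (r * X t - c t) t) ∧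
        (∀ t, 0 ≤ t → 0 < c t) ∧
        (∀ t, 0 ≤ t → 0 ≤ X t) ∧
        IntegrableOn (fun t => Real.exp (-β * t) * Real.log (c t)) (Ioi 0) ∧
        J = ∫ t in Ioi (0:ℝ), Real.exp (-β * t) * Real.log (c t)}
      ((1/β) * Real.log x + (1/β) * (r/β + Real.log β - 1)) ∧
    ∃ X : ℝ → ℝ,
      X 0 = x ∧
      (∀ t, 0 ≤ t → HasDerivAt X (r * X t - β * X t) t) ∧
      (∀ t, 0 ≤ t → 0 < X t) ∧
      (∫ t in Ioi (0:ℝ), Real.exp (-β * t) * Real.log (β * X t))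
        = (1/β) * Real.log x + (1/β) * (r/β + Real.log β - 1) := by
  have hvalue := integral_exp_neg_mul_mul_log_optimal (r := r) hβ hx
  have hderiv : ∀ t, 0 ≤ t → HasDerivAt (optimalWealth β r x)
      (r * optimalWealth β r x t - β * optimalWealth β r x t) t :=
    fun t _ => hasDerivAt_optimalWealth β r x t
  refine ⟨⟨⟨optimalWealth β r x, fun t => β * optimalWealth β r x t, optimalWealth_zero β r x,
      hderiv, fun t _ => mul_pos hβ (optimalWealth_pos hx t),
      fun t _ => (optimalWealth_pos hx t).le, integrableOn_exp_neg_mul_mul_log_optimal hβ hx,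
      hvalue.symm⟩, ?_⟩,
    optimalWealth β r x, optimalWealth_zero β r x, hderiv, fun t _ => optimalWealth_pos hx t,
    hvalue⟩
  rintro J ⟨X, c, h0, hX, hc, hXnonneg, hint, rfl⟩
  exact integral_exp_neg_mul_mul_log_le hβ hx h0 hX hc hXnonneg hint
end

section
/- Let β > 0, r, ρ, λ with ρ > r + λ > 0 and μ = ρ. Set q* = (ρ−r−λ)/(β(ρ−r)) and m(q) = (β/(β+λ))[(ρ−r)q + (λ/β) ln(1/β − q)]. Then z(q) := (βq/(1−βq)) exp(−∫_q^{q*} m'(v)/(βv) dv) equals ((ρ−r−λ)/λ)^{λ/(β+λ)} ((ρ−r−λ)/(β(ρ−r)))^{−(ρ−r)/(β+λ)} (βq/(1−βq))^{β/(β+λ)} q^{(ρ−r)/(β+λ)} for q ∈ (0, q*]. In particular z(q*) = (ρ−r−λ)/λ. -/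
/-!
By partial fractions, `c / (v (1 - β v)) = c / v + c β / (1 - β v)`, so the integrand has the
antiderivative `((a - c) log v + c log (1 - β v)) / (β + c)` with `a = ρ - r`, `c = λ`. Hence
`z(q)` is an explicit product of powers of `β`, `q`, `q*`, `1 - β q`, `1 - β q*`, and it equals
`g(q*)^(λ/(β+λ)) q*^(-(ρ-r)/(β+λ)) g(q)^(β/(β+λ)) q^((ρ-r)/(β+λ))` with `g(x) = β x / (1 - β x)`
for every upper endpoint `q*` with `β q* < 1`. The specific `q*` of the corner case only enters
through `g(q*) = (ρ - r - λ) / λ`, which is also `z(q*)`.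
-/

open Set MeasureTheory Real

theorem hasDerivAt_sub_mul_log_add_mul_log_one_sub (a c β : ℝ) {x : ℝ} (hx : x ≠ 0)
    (hx' : 1 - β * x ≠ 0) :
    HasDerivAt (fun v => (a - c) * log v + c * log (1 - β * v))
      (a / x - c / (x * (1 - β * x))) x := by
  have hlin : HasDerivAt (fun v : ℝ => 1 - β * v) (-β) x := by
    simpa using ((hasDerivAt_id x).const_mul β).const_sub 1
  refine (((hasDerivAt_log hx).const_mul (a - c)).add ((hlin.log hx').const_mul c)).congr_deriv ?_
  -- `field_simp` looks for the side condition in its own normal form `1 - x * β`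
  have : 1 - x * β ≠ 0 := by rwa [mul_comm]
  field_simp
  ring

theorem integral_div_sub_div_mul_one_sub (a c : ℝ) {β p q : ℝ} (hβ : 0 ≤ β) (hq : 0 < q)
    (hqp : q ≤ p) (hp : β * p < 1) :
    ∫ v in Ioc q p, (a / v - c / (v * (1 - β * v))) =
      (a - c) * (log p - log q) + c * (log (1 - β * p) - log (1 - β * q)) := by
  have hpos : ∀ v ∈ uIcc q p, v ≠ 0 ∧ 1 - β * v ≠ 0 := by
    intro v hv
    rw [uIcc_of_le hqp] at hv
    have : β * v ≤ β * p := mul_le_mul_of_nonneg_left hv.2 hβ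
    exact ⟨(hq.trans_le hv.1).ne', by linarith⟩
  rw [← intervalIntegral.integral_of_le hqp,
    intervalIntegral.integral_eq_sub_of_hasDerivAt
      (fun v hv => hasDerivAt_sub_mul_log_add_mul_log_one_sub a c β (hpos v hv).1 (hpos v hv).2)]
  · ring
  · refine ContinuousOn.intervalIntegrable fun v hv => ContinuousAt.continuousWithinAt ?_
    have hv0 := (hpos v hv).1
    have hv0' := mul_ne_zero hv0 (hpos v hv).2
    fun_prop (disch := assumption)

/-- Taking logarithms, both sides are linear in `log β`, `log p`, `log q`, `log (1 - β p)`,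
`log (1 - β q)`; the coefficients agree since `λ/(β+λ) + β/(β+λ) = 1`. -/
theorem mul_exp_neg_log_combination_eq_rpow (a lam : ℝ) {β p q : ℝ} (hβ : 0 < β)
    (hs : β + lam ≠ 0) (hp : 0 < p) (hq : 0 < q) (hp1 : β * p < 1) (hq1 : β * q < 1) :
    β * q / (1 - β * q) * exp (-(1 / (β + lam) *
        ((a - lam) * (log p - log q) + lam * (log (1 - β * p) - log (1 - β * q))))) =
      (β * p / (1 - β * p)) ^ (lam / (β + lam)) * p ^ (-a / (β + lam))
        * (β * q / (1 - β * q)) ^ (β / (β + lam)) * q ^ (a / (β + lam)) := by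
  have hp1' : 0 < 1 - β * p := by linarith
  have hq1' : 0 < 1 - β * q := by linarith
  have hlog : ∀ x, 0 < x → 0 < 1 - β * x →
      log (β * x / (1 - β * x)) = log β + log x - log (1 - β * x) := fun x hx hx' => by
    rw [log_div (by positivity) hx'.ne', log_mul hβ.ne' hx.ne']
  have hgq : 0 < β * q / (1 - β * q) := by positivity
  rw [rpow_def_of_pos (by positivity), rpow_def_of_pos hp, rpow_def_of_pos hgq,
    rpow_def_of_pos hq, ← exp_add, ← exp_add, ← exp_add, ← exp_log hgq, ← exp_add,
    exp_eq_exp, exp_log hgq, hlog p hp hp1', hlog q hq hq1']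
  field_simp
  ring

/-- `zLink β lam a p q` is the link `z(q)` with `a = ρ - r` and upper endpoint `p = q*`. -/
noncomputable def zLink (β lam a p q : ℝ) : ℝ :=
  β * q / (1 - β * q) *
    exp (-∫ v in Ioc q p, (1 / (β + lam)) * (a / v - lam / (v * (1 - β * v))))

theorem zLink_eq_rpow (a : ℝ) {β lam p q : ℝ} (hβ : 0 < β) (hs : β + lam ≠ 0) (hq : 0 < q)
    (hqp : q ≤ p) (hp1 : β * p < 1) :
    zLink β lam a p q =
      (β * p / (1 - β * p)) ^ (lam / (β + lam)) * p ^ (-a / (β + lam))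
        * (β * q / (1 - β * q)) ^ (β / (β + lam)) * q ^ (a / (β + lam)) := by
  have hq1 : β * q < 1 := (mul_le_mul_of_nonneg_left hqp hβ.le).trans_lt hp1
  rw [zLink, integral_const_mul, integral_div_sub_div_mul_one_sub a lam hβ.le hq hqp hp1,
    mul_exp_neg_log_combination_eq_rpow a lam hβ hs (hq.trans_le hqp) hq hp1 hq1]

theorem zLink_self (β lam a p : ℝ) : zLink β lam a p p = β * p / (1 - β * p) := by
  simp [zLink]

theorem closed_form_z_corner_case_general (β lam ρ r : ℝ) (hβ : 0 < β) (hlam : 0 < lam)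
    (h1 : r + lam < ρ) :
    let qstar : ℝ := (ρ - r - lam) / (β * (ρ - r))
    let z : ℝ → ℝ := fun q =>
      (β * q / (1 - β * q)) *
        Real.exp (-∫ v in Ioc q qstar,
          (1/(β+lam)) * ((ρ - r)/v - lam/(v * (1 - β * v))))
    ((∀ q ∈ Ioc 0 qstar,
        z q = ((ρ - r - lam)/lam) ^ (lam/(β+lam))
          * ((ρ - r - lam)/(β*(ρ - r))) ^ (-(ρ - r)/(β+lam))
          * (β * q / (1 - β * q)) ^ (β/(β+lam))
          * q ^ ((ρ - r)/(β+lam))) ∧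
      z qstar = (ρ - r - lam)/lam) := by
  intro qstar z
  have hρr : 0 < ρ - r := by linarith
  have hβq : β * qstar = (ρ - r - lam) / (ρ - r) := by
    simp only [qstar]
    field_simp
  have hβq_lt : β * qstar < 1 := by
    rw [hβq, div_lt_one hρr]
    linarith
  have hodds : β * qstar / (1 - β * qstar) = (ρ - r - lam) / lam := by
    rw [hβq]
    field_simp [hlam.ne']
    ring
  refine ⟨fun q ⟨hq, hqp⟩ => ?_, (zLink_self β lam (ρ - r) qstar).trans hodds⟩
  rw [← hodds]
  exact zLink_eq_rpow (ρ - r) hβ (by positivity) hq hqp hβq_lt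

/-- Closed-form evaluation of the coordinate link `z(q)` in the corner case
`μ = ρ > r + λ` of the dividend model, where
`m'(v)/(βv) = (1/(β+λ))((ρ-r)/v - λ/(v(1-βv)))`. -/
theorem closed_form_z_corner_case (β lam ρ r : ℝ) (hβ : 0 < β) (hlam : 0 < lam)
    (h1 : r + lam < ρ) (h2 : 0 < r + lam) :
    let qstar : ℝ := (ρ - r - lam) / (β * (ρ - r))
    let z : ℝ → ℝ := fun q =>
      (β * q / (1 - β * q)) *
        Real.exp (-∫ v in Ioc q qstar,
          (1/(β+lam)) * ((ρ - r)/v - lam/(v * (1 - β * v))))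
    ((∀ q ∈ Ioc 0 qstar,
        z q = ((ρ - r - lam)/lam) ^ (lam/(β+lam))
          * ((ρ - r - lam)/(β*(ρ - r))) ^ (-(ρ - r)/(β+lam))
          * (β * q / (1 - β * q)) ^ (β/(β+lam))
          * q ^ ((ρ - r)/(β+lam))) ∧
      z qstar = (ρ - r - lam)/lam) :=
  closed_form_z_corner_case_general β lam ρ r hβ hlam h1
end

section
/- Let β > 0, λ ≥ 0, r, ρ with μ = ρ ≤ r + λ, and define V(s,x) = (1/β) ln(s+x) + (1/β)(r/β + ln β − 1) and F(x) = (1/β) ln x + (1/β)(r/β + ln β − 1). Then for all s > 0, x > 0: −ln V_x − 1 + r x V_x + ρ s V_s − (β+λ)V + λF(x) = (λ/β) ln(x/(s+x)) + ((ρ−r)/β)(s/(s+x)) ≤ 0. -/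
/-! The HJB expression collapses to `(λ log α + (ρ - r)(1 - α)) / β` with `α = x/(s+x) ∈ (0,1)`.
Since `log α ≤ α - 1` and `λ ≥ 0`, the numerator is at most `(ρ - r - λ)(1 - α) ≤ 0`. -/

open Real

lemma mul_log_add_mul_one_sub_nonpos {a c t : ℝ} (ha : 0 ≤ a) (hc : c ≤ a) (ht₀ : 0 < t)
    (ht₁ : t ≤ 1) : a * log t + c * (1 - t) ≤ 0 := by
  have hlog : a * log t ≤ a * (t - 1) :=
    mul_le_mul_of_nonneg_left (log_le_sub_one_of_pos ht₀) ha
  have hlin : c * (1 - t) ≤ a * (1 - t) := mul_le_mul_of_nonneg_right hc (by linarith)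
  linarith

theorem degenerate_supersolution_general (β lam ρ r : ℝ) (hβ : 0 < β) (hlam : 0 ≤ lam)
    (hρ : ρ ≤ r + lam) :
    let V : ℝ → ℝ → ℝ := fun s x =>
      (1/β) * Real.log (s + x) + (1/β) * (r/β + Real.log β - 1)
    let F : ℝ → ℝ := fun x =>
      (1/β) * Real.log x + (1/β) * (r/β + Real.log β - 1)
    ∀ s x : ℝ, 0 < s → 0 < x →
      (-Real.log (1/(β*(s+x))) - 1 + r * x * (1/(β*(s+x))) + ρ * s * (1/(β*(s+x)))
          - (β + lam) * V s x + lam * F x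
        = (lam/β) * Real.log (x/(s+x)) + ((ρ - r)/β) * (s/(s+x))) ∧
      (lam/β) * Real.log (x/(s+x)) + ((ρ - r)/β) * (s/(s+x)) ≤ 0 := by
  intro V F s x hs hx
  have hsx : 0 < s + x := by linarith
  refine ⟨?_, ?_⟩
  · have hlog_inv : log (1 / (β * (s + x))) = -(log β + log (s + x)) := by
      rw [one_div, log_inv, log_mul hβ.ne' hsx.ne']
    simp only [V, F, hlog_inv, log_div hx.ne' hsx.ne']
    field_simp
    ring
  · have hshare : s / (s + x) = 1 - x / (s + x) := by field_simp; ring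
    have hα₁ : x / (s + x) ≤ 1 := (div_le_one hsx).mpr (by linarith)
    rw [hshare, div_mul_eq_mul_div, div_mul_eq_mul_div, ← add_div]
    exact div_nonpos_of_nonpos_of_nonneg
      (mul_log_add_mul_one_sub_nonpos hlam (by linarith) (div_pos hx hsx) hα₁) hβ.le

/-- In the degenerate regime `μ = ρ ≤ r + λ`, the candidate value function is a
supersolution of the HJB operator: the drift expression evaluates to
`(λ/β)ln(x/(s+x)) + ((ρ-r)/β)(s/(s+x))` which is nonpositive. -/
theorem degenerate_supersolution (β lam ρ r μ : ℝ) (hβ : 0 < β) (hlam : 0 ≤ lam)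
    (hμ : μ = ρ) (hρ : ρ ≤ r + lam) :
    let V : ℝ → ℝ → ℝ := fun s x =>
      (1/β) * Real.log (s + x) + (1/β) * (r/β + Real.log β - 1)
    let F : ℝ → ℝ := fun x =>
      (1/β) * Real.log x + (1/β) * (r/β + Real.log β - 1)
    ∀ s x : ℝ, 0 < s → 0 < x →
      (-Real.log (1/(β*(s+x))) - 1 + r * x * (1/(β*(s+x))) + ρ * s * (1/(β*(s+x)))
          - (β + lam) * V s x + lam * F x
        = (lam/β) * Real.log (x/(s+x)) + ((ρ - r)/β) * (s/(s+x))) ∧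
      (lam/β) * Real.log (x/(s+x)) + ((ρ - r)/β) * (s/(s+x)) ≤ 0 :=
  degenerate_supersolution_general β lam ρ r hβ hlam hρ
end
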